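/- arXiv:2107.02510 — 4 statements merged into one kernel-verified Lean document; each statement's English description precedes it below -/
import Mathlib

section
/- Fix τ_1, τ_2 > 0. The function f_W(w) = (1/π) · (τ_1 √(w+τ_1²) + τ_2 √(w+τ_2²)) / (√(w+τ_1²) √(w+τ_2²) (w+τ_1²+τ_2²)) for w > 0 is a probability density on (0,∞): it is positive and ∫_0^∞ f_W(w) dw = 1. -/
open MeasureTheory Real Set Filter Topology

/-! The function `f_W` has the elementary antiderivative
`F w = (2 / π) (arctan (√(w + τ₂²) / τ₁) + arctan (√(w + τ₁²) / τ₂)) - 1`.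
At `w = 0` the two arctangents are those of `τ₂ / τ₁` and its inverse, which add up to `π / 2`,
so `F 0 = 0`, while `F w → 1` as `w → ∞`; as `f_W > 0`, the improper integral is this limit. -/

noncomputable def horseshoeDiffMixingDensity (τ₁ τ₂ w : ℝ) : ℝ :=
  (1 / π) * (τ₁ * √(w + τ₁ ^ 2) + τ₂ * √(w + τ₂ ^ 2)) /
    (√(w + τ₁ ^ 2) * √(w + τ₂ ^ 2) * (w + τ₁ ^ 2 + τ₂ ^ 2))

noncomputable def horseshoeDiffMixingCDF (τ₁ τ₂ w : ℝ) : ℝ :=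
  (2 / π) * (arctan (√(w + τ₂ ^ 2) / τ₁) + arctan (√(w + τ₁ ^ 2) / τ₂)) - 1

lemma hasDerivAt_arctan_sqrt_add_div {a b w : ℝ} (hw : 0 < w + a) (hb : b ≠ 0) :
    HasDerivAt (fun x => arctan (√(x + a) / b)) (b / (2 * √(w + a) * (w + a + b ^ 2))) w := by
  have hs : 0 < √(w + a) := sqrt_pos.2 hw
  refine ((((hasDerivAt_id w).add_const a).sqrt hw.ne').div_const b).arctan.congr_deriv ?_
  simp only [id_eq, div_pow, sq_sqrt hw.le]
  field_simp
  ring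

lemma tendsto_arctan_sqrt_add_div_atTop (a : ℝ) {b : ℝ} (hb : 0 < b) :
    Tendsto (fun x => arctan (√(x + a) / b)) atTop (𝓝 (π / 2)) :=
  (tendsto_nhds_of_tendsto_nhdsWithin tendsto_arctan_atTop).comp <|
    (tendsto_sqrt_atTop.comp (tendsto_atTop_add_const_right _ a tendsto_id)).atTop_div_const hb

lemma arctan_div_add_arctan_div {x y : ℝ} (hx : 0 < x) (hy : 0 < y) :
    arctan (x / y) + arctan (y / x) = π / 2 := by
  rw [← inv_div x y, arctan_inv_of_pos (div_pos hx hy)]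
  ring

variable {τ₁ τ₂ : ℝ}

lemma horseshoeDiffMixingDensity_pos (hτ₁ : 0 < τ₁) (hτ₂ : 0 < τ₂) {w : ℝ} (hw : 0 ≤ w) :
    0 < horseshoeDiffMixingDensity τ₁ τ₂ w := by
  have h₁ : 0 < √(w + τ₁ ^ 2) := sqrt_pos.2 (by positivity)
  have h₂ : 0 < √(w + τ₂ ^ 2) := sqrt_pos.2 (by positivity)
  unfold horseshoeDiffMixingDensity
  positivity

lemma hasDerivAt_horseshoeDiffMixingCDF (hτ₁ : 0 < τ₁) (hτ₂ : 0 < τ₂) {w : ℝ} (hw : 0 ≤ w) :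
    HasDerivAt (horseshoeDiffMixingCDF τ₁ τ₂) (horseshoeDiffMixingDensity τ₁ τ₂ w) w := by
  have h₁ : 0 < w + τ₁ ^ 2 := by positivity
  have h₂ : 0 < w + τ₂ ^ 2 := by positivity
  have hs₁ : 0 < √(w + τ₁ ^ 2) := sqrt_pos.2 h₁
  have hs₂ : 0 < √(w + τ₂ ^ 2) := sqrt_pos.2 h₂
  refine ((((hasDerivAt_arctan_sqrt_add_div h₂ hτ₁.ne').add
    (hasDerivAt_arctan_sqrt_add_div h₁ hτ₂.ne')).const_mul (2 / π)).sub_const 1).congr_deriv ?_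
  unfold horseshoeDiffMixingDensity
  have hπ := pi_pos
  field_simp
  ring

lemma horseshoeDiffMixingCDF_zero (hτ₁ : 0 < τ₁) (hτ₂ : 0 < τ₂) :
    horseshoeDiffMixingCDF τ₁ τ₂ 0 = 0 := by
  simp only [horseshoeDiffMixingCDF, zero_add, sqrt_sq hτ₁.le, sqrt_sq hτ₂.le,
    arctan_div_add_arctan_div hτ₂ hτ₁]
  field_simp [pi_pos.ne']
  ring

lemma tendsto_horseshoeDiffMixingCDF_atTop (hτ₁ : 0 < τ₁) (hτ₂ : 0 < τ₂) :
    Tendsto (horseshoeDiffMixingCDF τ₁ τ₂) atTop (𝓝 1) := by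
  have h := ((tendsto_arctan_sqrt_add_div_atTop (τ₂ ^ 2) hτ₁).add
    (tendsto_arctan_sqrt_add_div_atTop (τ₁ ^ 2) hτ₂)).const_mul (2 / π) |>.sub_const 1
  rwa [show 2 / π * (π / 2 + π / 2) - 1 = 1 by field_simp [pi_pos.ne']; ring] at h

lemma integral_horseshoeDiffMixingDensity (hτ₁ : 0 < τ₁) (hτ₂ : 0 < τ₂) :
    ∫ w in Ioi (0 : ℝ), horseshoeDiffMixingDensity τ₁ τ₂ w = 1 := by
  rw [integral_Ioi_of_hasDerivAt_of_nonneg'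
    (fun w hw => hasDerivAt_horseshoeDiffMixingCDF hτ₁ hτ₂ hw)
    (fun w hw => (horseshoeDiffMixingDensity_pos hτ₁ hτ₂ (le_of_lt hw)).le)
    (tendsto_horseshoeDiffMixingCDF_atTop hτ₁ hτ₂), horseshoeDiffMixingCDF_zero hτ₁ hτ₂, sub_zero]

/-- The horseshoe-difference mixing function f_W is a
probability density on (0,∞): it is positive there and integrates to 1. -/
theorem fW_is_density (τ₁ τ₂ : ℝ) (hτ₁ : 0 < τ₁) (hτ₂ : 0 < τ₂) :
    (∀ w : ℝ, 0 < w →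
      0 < (1 / π) * (τ₁ * Real.sqrt (w + τ₁ ^ 2) + τ₂ * Real.sqrt (w + τ₂ ^ 2)) /
          (Real.sqrt (w + τ₁ ^ 2) * Real.sqrt (w + τ₂ ^ 2) * (w + τ₁ ^ 2 + τ₂ ^ 2))) ∧
    (∫ w in Ioi (0 : ℝ),
      (1 / π) * (τ₁ * Real.sqrt (w + τ₁ ^ 2) + τ₂ * Real.sqrt (w + τ₂ ^ 2)) /
        (Real.sqrt (w + τ₁ ^ 2) * Real.sqrt (w + τ₂ ^ 2) * (w + τ₁ ^ 2 + τ₂ ^ 2))) = 1 :=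
  ⟨fun _ hw => horseshoeDiffMixingDensity_pos hτ₁ hτ₂ hw.le,
    integral_horseshoeDiffMixingDensity hτ₁ hτ₂⟩
end

section
/- If λ_1, λ_2 are independent standard half-Cauchy random variables and τ_1, τ_2 > 0, then the random variable W = τ_1²λ_1² + τ_2²λ_2² has density f_W(w) = (1/π)(τ_1√(w+τ_1²) + τ_2√(w+τ_2²)) / (√(w+τ_1²)√(w+τ_2²)(w+τ_1²+τ_2²)) on (0,∞). -/
/-!
By independence, the law of `W` is the convolution of the laws of `τ₁²λ₁²` and `τ₂²λ₂²`, and the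
change of variables `v = c²x²` shows that `c²λ²` has density `c / (π √v (v + c²))` on `(0, ∞)`.
In the convolution integral over `0 < u < w`, the substitution `u = w x² / (1 + x²)` (that is,
`u = w sin²θ` with `x = tan θ`) clears both square roots, since `√u √(w - u) = w x / (1 + x²)`, and
leaves the integrand `2τ₁τ₂ (1 + x²) / (π² A B)` on `(0, ∞)`, where `A = (w + τ₁²) x² + τ₁²` and
`B = τ₂² x² + (w + τ₂²)`. Since `A + B = (w + τ₁² + τ₂²)(1 + x²)`, partial fractions reduce this to
two integrals `∫₀^∞ dx / (a x² + b) = π / (2 √(ab))`.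
-/

open MeasureTheory Real Set

noncomputable def halfCauchyPDFReal (x : ℝ) : ℝ :=
  if 0 < x then 2 / π * (1 + x ^ 2)⁻¹ else 0

noncomputable def sqHalfCauchyPDFReal (c v : ℝ) : ℝ :=
  if 0 < v then c / (π * √v * (v + c ^ 2)) else 0

lemma measurable_halfCauchyPDFReal : Measurable halfCauchyPDFReal :=
  Measurable.ite measurableSet_Ioi (by fun_prop) measurable_const

lemma measurable_sqHalfCauchyPDFReal (c : ℝ) : Measurable (sqHalfCauchyPDFReal c) :=
  Measurable.ite measurableSet_Ioi (by fun_prop) measurable_const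

lemma sqHalfCauchyPDFReal_nonneg {c : ℝ} (hc : 0 ≤ c) (v : ℝ) : 0 ≤ sqHalfCauchyPDFReal c v := by
  unfold sqHalfCauchyPDFReal
  split_ifs <;> positivity

lemma lintegral_ofReal_ite_pos_mul (p : ℝ → ℝ) (F : ℝ → ENNReal) :
    ∫⁻ x, ENNReal.ofReal (if 0 < x then p x else 0) * F x
      = ∫⁻ x in Ioi 0, ENNReal.ofReal (p x) * F x := by
  rw [← lintegral_indicator measurableSet_Ioi]
  refine lintegral_congr fun x => ?_
  by_cases hx : 0 < x <;> simp [hx]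

lemma image_const_mul_sq_Ioi {c : ℝ} (hc : 0 < c) :
    (fun x => c ^ 2 * x ^ 2) '' Ioi 0 = Ioi 0 := by
  ext v
  constructor
  · rintro ⟨x, hx, rfl⟩
    have hx : 0 < x := hx
    exact mem_Ioi.2 (by positivity)
  · intro (hv : 0 < v)
    refine ⟨√v / c, div_pos (sqrt_pos.2 hv) hc, ?_⟩
    simp only
    rw [div_pow, sq_sqrt hv.le]
    field_simp

lemma map_const_mul_sq_halfCauchy {c : ℝ} (hc : 0 < c) :
    (volume.withDensity fun x => ENNReal.ofReal (halfCauchyPDFReal x)).map (fun x => c ^ 2 * x ^ 2)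
      = volume.withDensity fun v => ENNReal.ofReal (sqHalfCauchyPDFReal c v) := by
  refine Measure.ext_of_lintegral _ fun F hF => ?_
  rw [lintegral_map hF (by fun_prop),
    lintegral_withDensity_eq_lintegral_mul _ measurable_halfCauchyPDFReal.ennreal_ofReal
      (by fun_prop : Measurable fun x : ℝ => F (c ^ 2 * x ^ 2)),
    lintegral_withDensity_eq_lintegral_mul _ (measurable_sqHalfCauchyPDFReal c).ennreal_ofReal hF]
  simp only [Pi.mul_apply, halfCauchyPDFReal, sqHalfCauchyPDFReal, lintegral_ofReal_ite_pos_mul]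
  have hderiv : ∀ x ∈ Ioi (0 : ℝ),
      HasDerivWithinAt (fun x => c ^ 2 * x ^ 2) (2 * c ^ 2 * x) (Ioi 0) x := fun x _ => by
    simpa [mul_comm, mul_left_comm] using ((hasDerivAt_pow 2 x).const_mul (c ^ 2)).hasDerivWithinAt
  have hmono : MonotoneOn (fun x => c ^ 2 * x ^ 2) (Ioi 0) := fun x (hx : 0 < x) y _ hxy => by
    simp only
    gcongr
  conv_rhs => rw [← image_const_mul_sq_Ioi hc,
    lintegral_image_eq_lintegral_deriv_mul_of_monotoneOn measurableSet_Ioi hderiv hmono]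
  refine setLIntegral_congr_fun measurableSet_Ioi fun x (hx : 0 < x) => ?_
  rw [← mul_assoc, ← ENNReal.ofReal_mul (by positivity)]
  congr 2
  rw [sqrt_mul' _ (sq_nonneg x), sqrt_sq hc.le, sqrt_sq hx.le]
  field_simp
  ring

lemma lconvolution_eq_setLIntegral_Ioo {f g : ℝ → ENNReal} (hf : ∀ x ≤ 0, f x = 0)
    (hg : ∀ x ≤ 0, g x = 0) (w : ℝ) :
    (f ⋆ₗ g) w = ∫⁻ u in Ioo 0 w, f u * g (w - u) := by
  rw [lconvolution_def, ← lintegral_indicator measurableSet_Ioo]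
  refine lintegral_congr fun u => ?_
  by_cases hu : u ∈ Ioo 0 w
  · rw [indicator_of_mem hu, neg_add_eq_sub]
  · rw [indicator_of_notMem hu]
    rcases le_or_gt u 0 with hu0 | hu0
    · rw [hf u hu0, zero_mul]
    · rw [hg (-u + w) (by simp only [mem_Ioo, not_and, not_lt] at hu; linarith [hu hu0]), mul_zero]

lemma image_mul_sq_div_one_add_sq_Ioi {w : ℝ} (hw : 0 < w) :
    (fun x => w * x ^ 2 / (1 + x ^ 2)) '' Ioi 0 = Ioo 0 w := by
  ext u
  constructor
  · rintro ⟨x, hx, rfl⟩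
    have hx : 0 < x := hx
    exact ⟨by positivity, (div_lt_iff₀ (by positivity)).2 (by nlinarith)⟩
  · rintro ⟨hu, huw⟩
    have hwu : 0 < w - u := sub_pos.2 huw
    refine ⟨√(u / (w - u)), sqrt_pos.2 (div_pos hu hwu), ?_⟩
    simp only
    rw [sq_sqrt (div_pos hu hwu).le]
    field_simp
    ring

lemma hasDerivAt_mul_sq_div_one_add_sq (w x : ℝ) :
    HasDerivAt (fun x => w * x ^ 2 / (1 + x ^ 2)) (2 * w * x / (1 + x ^ 2) ^ 2) x := by
  have h : HasDerivAt (fun x => w * x ^ 2 / (1 + x ^ 2)) _ x :=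
    ((hasDerivAt_pow 2 x).const_mul w).div ((hasDerivAt_pow 2 x).const_add 1) (by positivity)
  convert h using 1
  field_simp
  ring

lemma monotoneOn_mul_sq_div_one_add_sq {w : ℝ} (hw : 0 ≤ w) :
    MonotoneOn (fun x => w * x ^ 2 / (1 + x ^ 2)) (Ioi 0) := by
  intro x (hx : 0 < x) y _ hxy
  simp only
  rw [div_le_div_iff₀ (by positivity) (by positivity)]
  have : x ^ 2 ≤ y ^ 2 := by nlinarith
  nlinarith

lemma lintegral_Ioo_eq_lintegral_Ioi_mul_sq_div_one_add_sq {w : ℝ} (hw : 0 < w)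
    (F : ℝ → ENNReal) :
    ∫⁻ u in Ioo 0 w, F u = ∫⁻ x in Ioi 0,
      ENNReal.ofReal (2 * w * x / (1 + x ^ 2) ^ 2) * F (w * x ^ 2 / (1 + x ^ 2)) := by
  rw [← image_mul_sq_div_one_add_sq_Ioi hw]
  exact lintegral_image_eq_lintegral_deriv_mul_of_monotoneOn measurableSet_Ioi
    (fun x _ => (hasDerivAt_mul_sq_div_one_add_sq w x).hasDerivWithinAt)
    (monotoneOn_mul_sq_div_one_add_sq hw.le) F

lemma inv_mul_sq_add_eq {a b : ℝ} (ha : 0 < a) (hb : 0 < b) (x : ℝ) :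
    (a * x ^ 2 + b)⁻¹ = b⁻¹ * (1 + (√(a / b) * x) ^ 2)⁻¹ := by
  rw [mul_pow, sq_sqrt (div_pos ha hb).le, ← mul_inv]
  congr 1
  field_simp
  ring

lemma integrable_inv_mul_sq_add {a b : ℝ} (ha : 0 < a) (hb : 0 < b) :
    Integrable fun x : ℝ => (a * x ^ 2 + b)⁻¹ := by
  simp_rw [inv_mul_sq_add_eq ha hb]
  exact (integrable_inv_one_add_sq.comp_mul_left' (sqrt_pos.2 (div_pos ha hb)).ne').const_mul _

lemma integral_Ioi_inv_mul_sq_add {a b : ℝ} (ha : 0 < a) (hb : 0 < b) :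
    ∫ x in Ioi (0 : ℝ), (a * x ^ 2 + b)⁻¹ = π / (2 * √(a * b)) := by
  have hstd : ∫ y in Ioi (0 : ℝ), (1 + y ^ 2)⁻¹ = π / 2 := by
    simp [integral_Ioi_inv_one_add_sq]
  simp_rw [inv_mul_sq_add_eq ha hb]
  rw [integral_const_mul, integral_comp_mul_left_Ioi (fun y => (1 + y ^ 2)⁻¹) 0
    (sqrt_pos.2 (div_pos ha hb)), mul_zero, hstd, smul_eq_mul, sqrt_div ha.le, sqrt_mul ha.le]
  have : 0 < √a := sqrt_pos.2 ha
  have : 0 < √b := sqrt_pos.2 hb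
  field_simp
  linear_combination mul_self_sqrt hb.le

lemma lintegral_Ioi_inv_mul_sq_add {a b : ℝ} (ha : 0 < a) (hb : 0 < b) :
    ∫⁻ x in Ioi (0 : ℝ), ENNReal.ofReal ((a * x ^ 2 + b)⁻¹)
      = ENNReal.ofReal (π / (2 * √(a * b))) := by
  rw [← integral_Ioi_inv_mul_sq_add ha hb, ofReal_integral_eq_lintegral_ofReal
    (integrable_inv_mul_sq_add ha hb).integrableOn
    (Filter.Eventually.of_forall fun x => by positivity)]

lemma sqHalfCauchyPDFReal_mul_sub_eq {τ₁ τ₂ w x : ℝ} (hτ₁ : 0 < τ₁) (hτ₂ : 0 < τ₂) (hw : 0 < w)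
    (hx : 0 < x) :
    2 * w * x / (1 + x ^ 2) ^ 2 * (sqHalfCauchyPDFReal τ₁ (w * x ^ 2 / (1 + x ^ 2)) *
      sqHalfCauchyPDFReal τ₂ (w - w * x ^ 2 / (1 + x ^ 2)))
    = 2 * τ₁ * τ₂ / (π ^ 2 * (w + τ₁ ^ 2 + τ₂ ^ 2)) *
      (((w + τ₁ ^ 2) * x ^ 2 + τ₁ ^ 2)⁻¹ + (τ₂ ^ 2 * x ^ 2 + (w + τ₂ ^ 2))⁻¹) := by
  set u := w * x ^ 2 / (1 + x ^ 2) with hu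
  have hwu : w - u = w / (1 + x ^ 2) := by rw [hu]; field_simp; ring
  have hu_pos : 0 < u := by positivity
  have hwu_pos : 0 < w - u := by rw [hwu]; positivity
  have hsqrt : √u * √(w - u) = w * x / (1 + x ^ 2) := by
    rw [← sqrt_mul hu_pos.le, hwu, hu, show w * x ^ 2 / (1 + x ^ 2) * (w / (1 + x ^ 2))
      = (w * x / (1 + x ^ 2)) ^ 2 by ring, sqrt_sq (by positivity)]
  have : 0 < √u := sqrt_pos.2 hu_pos
  have : 0 < √(w - u) := sqrt_pos.2 hwu_pos
  rw [sqHalfCauchyPDFReal, sqHalfCauchyPDFReal, if_pos hu_pos, if_pos hwu_pos,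
    div_mul_div_comm, show π * √u * (u + τ₁ ^ 2) * (π * √(w - u) * (w - u + τ₂ ^ 2))
      = π ^ 2 * (√u * √(w - u)) * (u + τ₁ ^ 2) * (w - u + τ₂ ^ 2) by ring, hsqrt, hwu, hu]
  field_simp
  ring

lemma lintegral_sqHalfCauchyPDFReal_mul_sub {τ₁ τ₂ w : ℝ} (hτ₁ : 0 < τ₁) (hτ₂ : 0 < τ₂)
    (hw : 0 < w) :
    ∫⁻ u in Ioo 0 w, ENNReal.ofReal (sqHalfCauchyPDFReal τ₁ u) *
        ENNReal.ofReal (sqHalfCauchyPDFReal τ₂ (w - u))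
      = ENNReal.ofReal ((1 / π) * (τ₁ * √(w + τ₁ ^ 2) + τ₂ * √(w + τ₂ ^ 2)) /
          (√(w + τ₁ ^ 2) * √(w + τ₂ ^ 2) * (w + τ₁ ^ 2 + τ₂ ^ 2))) := by
  set C := 2 * τ₁ * τ₂ / (π ^ 2 * (w + τ₁ ^ 2 + τ₂ ^ 2)) with hC
  have hC_nonneg : 0 ≤ C := by positivity
  have hpartial : ∀ x ∈ Ioi (0 : ℝ), ENNReal.ofReal (2 * w * x / (1 + x ^ 2) ^ 2) *
      (ENNReal.ofReal (sqHalfCauchyPDFReal τ₁ (w * x ^ 2 / (1 + x ^ 2))) *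
        ENNReal.ofReal (sqHalfCauchyPDFReal τ₂ (w - w * x ^ 2 / (1 + x ^ 2))))
      = ENNReal.ofReal C * ENNReal.ofReal (((w + τ₁ ^ 2) * x ^ 2 + τ₁ ^ 2)⁻¹) +
        ENNReal.ofReal C * ENNReal.ofReal ((τ₂ ^ 2 * x ^ 2 + (w + τ₂ ^ 2))⁻¹) := by
    intro x (hx : 0 < x)
    rw [← ENNReal.ofReal_mul (sqHalfCauchyPDFReal_nonneg hτ₁.le _),
      ← ENNReal.ofReal_mul (by positivity), ← ENNReal.ofReal_mul hC_nonneg,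
      ← ENNReal.ofReal_mul hC_nonneg, ← ENNReal.ofReal_add (by positivity) (by positivity),
      ← mul_add, sqHalfCauchyPDFReal_mul_sub_eq hτ₁ hτ₂ hw hx]
  rw [lintegral_Ioo_eq_lintegral_Ioi_mul_sq_div_one_add_sq hw,
    setLIntegral_congr_fun measurableSet_Ioi hpartial, lintegral_add_left (by fun_prop),
    lintegral_const_mul' _ _ ENNReal.ofReal_ne_top, lintegral_const_mul' _ _ ENNReal.ofReal_ne_top,
    lintegral_Ioi_inv_mul_sq_add (by positivity) (by positivity),
    lintegral_Ioi_inv_mul_sq_add (by positivity) (by positivity),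
    ← ENNReal.ofReal_mul hC_nonneg, ← ENNReal.ofReal_mul hC_nonneg,
    ← ENNReal.ofReal_add (by positivity) (by positivity)]
  congr 1
  rw [hC, sqrt_mul (by positivity), sqrt_mul (by positivity), sqrt_sq hτ₁.le, sqrt_sq hτ₂.le]
  have : 0 < √(w + τ₁ ^ 2) := sqrt_pos.2 (by positivity)
  have : 0 < √(w + τ₂ ^ 2) := sqrt_pos.2 (by positivity)
  field_simp
  ring

/-- If λ₁, λ₂ are independent standard half-Cauchy random
variables, then W = τ₁²λ₁² + τ₂²λ₂² has density
f_W(w) = (1/π)(τ₁√(w+τ₁²) + τ₂√(w+τ₂²)) / (√(w+τ₁²)√(w+τ₂²)(w+τ₁²+τ₂²))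
on (0,∞). -/
theorem sum_of_squared_half_cauchys_density
    {Ω : Type*} [MeasurableSpace Ω] (P : Measure Ω) [IsProbabilityMeasure P]
    (τ₁ τ₂ : ℝ) (hτ₁ : 0 < τ₁) (hτ₂ : 0 < τ₂)
    (l₁ l₂ : Ω → ℝ) (hm₁ : Measurable l₁) (hm₂ : Measurable l₂)
    (hindep : ProbabilityTheory.IndepFun l₁ l₂ P)
    (hlaw₁ : Measure.map l₁ P = volume.withDensity
      (fun x => ENNReal.ofReal (if 0 < x then (2 / π) * (1 + x ^ 2)⁻¹ else 0)))
    (hlaw₂ : Measure.map l₂ P = volume.withDensity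
      (fun x => ENNReal.ofReal (if 0 < x then (2 / π) * (1 + x ^ 2)⁻¹ else 0))) :
    Measure.map (fun ω => τ₁ ^ 2 * (l₁ ω) ^ 2 + τ₂ ^ 2 * (l₂ ω) ^ 2) P =
      volume.withDensity (fun w => ENNReal.ofReal
        (if 0 < w then
          (1 / π) * (τ₁ * Real.sqrt (w + τ₁ ^ 2) + τ₂ * Real.sqrt (w + τ₂ ^ 2)) /
            (Real.sqrt (w + τ₁ ^ 2) * Real.sqrt (w + τ₂ ^ 2) * (w + τ₁ ^ 2 + τ₂ ^ 2))
        else 0)) := by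
  have hsq_law {c : ℝ} (hc : 0 < c) {l : Ω → ℝ} (hm : Measurable l) (hl : Measure.map l P =
      volume.withDensity fun x => ENNReal.ofReal (halfCauchyPDFReal x)) :
      P.map (fun ω => c ^ 2 * l ω ^ 2) =
        volume.withDensity fun v => ENNReal.ofReal (sqHalfCauchyPDFReal c v) := by
    rw [← map_const_mul_sq_halfCauchy hc, ← hl, Measure.map_map (by fun_prop) hm]
    rfl
  have hsum : P.map (fun ω => τ₁ ^ 2 * l₁ ω ^ 2 + τ₂ ^ 2 * l₂ ω ^ 2)
      = P.map (fun ω => τ₁ ^ 2 * l₁ ω ^ 2) ∗ P.map (fun ω => τ₂ ^ 2 * l₂ ω ^ 2) :=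
    (hindep.comp (φ := fun x => τ₁ ^ 2 * x ^ 2) (ψ := fun x => τ₂ ^ 2 * x ^ 2)
      (by fun_prop) (by fun_prop)).map_add_eq_map_conv_map (by fun_prop) (by fun_prop)
  rw [hsum, hsq_law hτ₁ hm₁ hlaw₁, hsq_law hτ₂ hm₂ hlaw₂, conv_withDensity_eq_lconvolution
    (measurable_sqHalfCauchyPDFReal τ₁).ennreal_ofReal
    (measurable_sqHalfCauchyPDFReal τ₂).ennreal_ofReal]
  congr 1
  funext w
  rw [lconvolution_eq_setLIntegral_Ioo (fun x hx => by simp [sqHalfCauchyPDFReal, hx.not_gt])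
    (fun x hx => by simp [sqHalfCauchyPDFReal, hx.not_gt])]
  split_ifs with hw
  · exact lintegral_sqHalfCauchyPDFReal_mul_sub hτ₁ hτ₂ hw
  · rw [Ioo_eq_empty hw, Measure.restrict_empty, lintegral_zero_measure, ENNReal.ofReal_zero]
end

section
/- For fixed ν ≥ 1 and n_δ > 0, the Gaussian-prior Bayes factor BF₁₂ⁿ(t) = (1 + t²/ν)^{-(ν+1)/2} / [ (1+n_δ)^{-1/2} (1 + t²/(ν(1+n_δ)))^{-(ν+1)/2} ] satisfies BF₁₂ⁿ(t) ≥ (1+n_δ)^{-ν/2} for all t ∈ ℝ, and lim_{|t|→∞} BF₁₂ⁿ(t) = (1+n_δ)^{1/2} · (1+n_δ)^{-(ν+1)/2} = (1+n_δ)^{-ν/2} > 0. -/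
open Real Filter Topology

/-- Information paradox for the Gaussian-prior Bayes factor:
BF₁₂ⁿ(t) is bounded below by (1+n_δ)^{-ν/2}, which is its limit as |t| → ∞. -/
theorem gaussian_bayes_factor_information_paradox
    (ν : ℕ) (hν : 1 ≤ ν) (nδ : ℝ) (hnδ : 0 < nδ) :
    (∀ t : ℝ,
      (1 + nδ : ℝ) ^ (-(ν : ℝ) / 2) ≤
        (1 + t ^ 2 / ν) ^ (-((ν : ℝ) + 1) / 2) /
          ((1 + nδ) ^ (-(1 : ℝ) / 2) *
            (1 + t ^ 2 / (ν * (1 + nδ))) ^ (-((ν : ℝ) + 1) / 2))) ∧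
    Tendsto (fun t : ℝ =>
        (1 + t ^ 2 / ν) ^ (-((ν : ℝ) + 1) / 2) /
          ((1 + nδ) ^ (-(1 : ℝ) / 2) *
            (1 + t ^ 2 / (ν * (1 + nδ))) ^ (-((ν : ℝ) + 1) / 2)))
      atTop (nhds ((1 + nδ) ^ (-(ν : ℝ) / 2))) ∧
    Tendsto (fun t : ℝ =>
        (1 + t ^ 2 / ν) ^ (-((ν : ℝ) + 1) / 2) /
          ((1 + nδ) ^ (-(1 : ℝ) / 2) *
            (1 + t ^ 2 / (ν * (1 + nδ))) ^ (-((ν : ℝ) + 1) / 2)))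
      atBot (nhds ((1 + nδ) ^ (-(ν : ℝ) / 2))) := by
  set a : ℝ := 1 + nδ with ha_def
  have ha1 : 1 < a := by simp only [ha_def]; linarith
  have ha0 : 0 < a := by linarith
  have hν1 : (1:ℝ) ≤ (ν:ℝ) := by exact_mod_cast hν
  have hν0 : (0:ℝ) < (ν:ℝ) := by linarith
  set c : ℝ := ((ν:ℝ) + 1) / 2 with hc_def
  have hc : 0 < c := by positivity
  have hac : (0:ℝ) < a ^ ((1:ℝ)/2) := Real.rpow_pos_of_pos ha0 _
  -- value identity
  have hval : a ^ ((1:ℝ)/2) * a⁻¹ ^ c = a ^ (-(ν:ℝ)/2) := by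
    rw [Real.inv_rpow ha0.le, ← Real.rpow_neg ha0.le, ← Real.rpow_add ha0]
    congr 1
    rw [hc_def]; ring
  -- pointwise rewriting of the Bayes factor
  have key : ∀ t : ℝ,
      (1 + t ^ 2 / ν) ^ (-((ν : ℝ) + 1) / 2) /
        (a ^ (-(1 : ℝ) / 2) * (1 + t ^ 2 / (ν * a)) ^ (-((ν : ℝ) + 1) / 2))
      = a ^ ((1:ℝ)/2) * ((1 + t^2/(ν*a))/(1 + t^2/ν)) ^ c := by
    intro t
    have hx : (0:ℝ) < 1 + t^2/ν := by positivity
    have hy : (0:ℝ) < 1 + t^2/(ν*a) := by positivity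
    rw [show -((ν : ℝ) + 1) / 2 = -c by rw [hc_def]; ring,
        show -(1:ℝ)/2 = -((1:ℝ)/2) by ring,
        Real.rpow_neg hx.le, Real.rpow_neg hy.le, Real.rpow_neg ha0.le,
        Real.div_rpow hy.le hx.le]
    have hxc : (0:ℝ) < (1 + t^2/ν) ^ c := Real.rpow_pos_of_pos hx c
    have hyc : (0:ℝ) < (1 + t^2/(ν*a)) ^ c := Real.rpow_pos_of_pos hy c
    field_simp
  -- the ratio is bounded below by a⁻¹
  have hratio : ∀ t : ℝ, a⁻¹ ≤ (1 + t^2/(ν*a))/(1 + t^2/ν) := by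
    intro t
    have hx : (0:ℝ) < 1 + t^2/ν := by positivity
    rw [le_div_iff₀ hx, inv_mul_le_iff₀ ha0]
    have h2 : a * (t^2/(ν*a)) = t^2/ν := by field_simp
    rw [mul_add, mul_one, h2]
    linarith
  -- limit of the ratio along s → ∞
  have hg : Tendsto (fun s : ℝ => (1 + s/(ν*a))/(1 + s/ν)) atTop (𝓝 a⁻¹) := by
    have h1 : Tendsto (fun s : ℝ => (s⁻¹ + ((ν:ℝ)*a)⁻¹)/(s⁻¹ + (ν:ℝ)⁻¹)) atTop
        (𝓝 ((0 + ((ν:ℝ)*a)⁻¹)/(0 + (ν:ℝ)⁻¹))) := by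
      apply Tendsto.div
      · exact tendsto_inv_atTop_zero.add tendsto_const_nhds
      · exact tendsto_inv_atTop_zero.add tendsto_const_nhds
      · positivity
    have hlimval : ((0:ℝ) + ((ν:ℝ)*a)⁻¹)/(0 + (ν:ℝ)⁻¹) = a⁻¹ := by
      field_simp
      ring
    rw [hlimval] at h1
    refine h1.congr' ?_
    filter_upwards [eventually_ge_atTop (1:ℝ)] with s hs
    have hs0 : s ≠ 0 := by linarith
    have hd : (0:ℝ) < 1 + s/ν := by positivity
    field_simp
  -- combined limit lemma
  have hlim : ∀ l : Filter ℝ, Tendsto (fun t : ℝ => t^2) l atTop →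
      Tendsto (fun t : ℝ =>
        (1 + t ^ 2 / ν) ^ (-((ν : ℝ) + 1) / 2) /
          (a ^ (-(1 : ℝ) / 2) * (1 + t ^ 2 / (ν * a)) ^ (-((ν : ℝ) + 1) / 2)))
        l (𝓝 (a ^ (-(ν:ℝ)/2))) := by
    intro l hl
    have h2 : Tendsto (fun t : ℝ => ((1 + t^2/(ν*a))/(1 + t^2/ν)) ^ c) l (𝓝 (a⁻¹ ^ c)) :=
      Filter.Tendsto.rpow_const (hg.comp hl) (Or.inr hc.le)
    have h3 := (tendsto_const_nhds (x := a ^ ((1:ℝ)/2))).mul h2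
    rw [hval] at h3
    exact h3.congr fun t => (key t).symm
  refine ⟨fun t => ?_, hlim atTop (tendsto_pow_atTop (by norm_num : (2:ℕ) ≠ 0)), hlim atBot ?_⟩
  · rw [key t, ← hval]
    exact mul_le_mul_of_nonneg_left
      (Real.rpow_le_rpow (by positivity) (hratio t) hc.le) hac.le
  · have h := ((tendsto_pow_atTop (α := ℝ) (n := 2) (by norm_num)).comp tendsto_neg_atBot_atTop)
    exact h.congr fun t => neg_sq t
end

section
/- The function BF₁₂ⁿ(t) = (1 + t²/ν)^{-(ν+1)/2} / [ (1+n_δ)^{-1/2} (1 + t²/(ν(1+n_δ)))^{-(ν+1)/2} ] is strictly decreasing in |t|: for 0 ≤ t_1 < t_2, BF₁₂ⁿ(t_1) > BF₁₂ⁿ(t_2). -/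
/-!
Writing `x = t²` and `k = 1 + n_δ > 1`, the Bayes factor is
`k^{1/2} · ((1 + x/ν) / (1 + x/(νk)))^{-(ν+1)/2}`. The base is strictly increasing in `x`,
since the numerator grows at rate `1/ν` and the denominator only at rate `1/(νk)`, and the
exponent is negative.
-/

open Real Set

theorem strictMonoOn_one_add_div_div_one_add_div {p q : ℝ} (hp : 0 < p) (hpq : p < q) :
    StrictMonoOn (fun x : ℝ => (1 + x / p) / (1 + x / q)) (Ici 0) := by
  intro x (hx : 0 ≤ x) y (hy : 0 ≤ y) hxy
  have hq : 0 < q := hp.trans hpq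
  rw [div_lt_div_iff₀ (by positivity) (by positivity)]
  field_simp
  nlinarith [mul_pos (sub_pos.2 hxy) (sub_pos.2 hpq)]

noncomputable def bayesFactor (ν nδ t : ℝ) : ℝ :=
  (1 + t ^ 2 / ν) ^ (-(ν + 1) / 2) /
    ((1 + nδ) ^ (-(1 : ℝ) / 2) * (1 + t ^ 2 / (ν * (1 + nδ))) ^ (-(ν + 1) / 2))

theorem bayesFactor_eq {ν nδ : ℝ} (hν : 0 ≤ ν) (hnδ : 0 ≤ nδ) (t : ℝ) :
    bayesFactor ν nδ t =
      ((1 + t ^ 2 / ν) / (1 + t ^ 2 / (ν * (1 + nδ)))) ^ (-(ν + 1) / 2) /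
        (1 + nδ) ^ (-(1 : ℝ) / 2) := by
  rw [bayesFactor, div_rpow (by positivity) (by positivity), mul_comm, div_div]

theorem bayesFactor_strictAntiOn {ν nδ : ℝ} (hν : 0 < ν) (hnδ : 0 < nδ) :
    StrictAntiOn (bayesFactor ν nδ) (Ici 0) := by
  intro t₁ ht₁ t₂ ht₂ h12
  have hsq : t₁ ^ 2 < t₂ ^ 2 := pow_lt_pow_left₀ h12 ht₁ two_ne_zero
  have hbase := strictMonoOn_one_add_div_div_one_add_div hν
    (lt_mul_right hν (lt_add_of_pos_right 1 hnδ)) (sq_nonneg t₁) (sq_nonneg t₂) hsq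
  rw [bayesFactor_eq hν.le hnδ.le, bayesFactor_eq hν.le hnδ.le]
  gcongr ?_ / _
  exact rpow_lt_rpow_of_neg (by positivity) hbase (by linarith)

/-- The Gaussian-prior Bayes factor BF₁₂ⁿ(t) is strictly
decreasing in |t|. -/
theorem gaussian_bayes_factor_strict_anti
    (ν : ℝ) (hν : 1 ≤ ν) (nδ : ℝ) (hnδ : 0 < nδ) :
    ∀ t₁ t₂ : ℝ, 0 ≤ t₁ → t₁ < t₂ →
      (1 + t₂ ^ 2 / ν) ^ (-(ν + 1) / 2) /
          ((1 + nδ) ^ (-(1 : ℝ) / 2) *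
            (1 + t₂ ^ 2 / (ν * (1 + nδ))) ^ (-(ν + 1) / 2)) <
        (1 + t₁ ^ 2 / ν) ^ (-(ν + 1) / 2) /
          ((1 + nδ) ^ (-(1 : ℝ) / 2) *
            (1 + t₁ ^ 2 / (ν * (1 + nδ))) ^ (-(ν + 1) / 2)) := fun _ _ ht₁ h12 =>
  bayesFactor_strictAntiOn (zero_lt_one.trans_le hν) hnδ ht₁ (mem_Ici.2 (ht₁.trans h12.le)) h12
end
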